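/- arXiv:2301.08124 — 6 statements merged into one kernel-verified Lean document; each statement's English description precedes it below -/
import Mathlib

section
/- Let (x_n) be a nondecreasing sequence of real numbers, and let s: ℕ → ℕ be a computable function tending to infinity. If the sequence (x_{s(n+1)} − x_{s(n)})_n converges computably to 0, then the sequence (x_{n+1} − x_n)_n also converges computably to 0. -/
open Filter Topology

/-- `g` is a modulus of convergence of `x` to `y`. -/
def ConvModulus {X : Type*} [MetricSpace X] (x : ℕ → X) (y : X) (g : ℕ → ℕ) : Prop :=
  ∀ n m : ℕ, g n ≤ m → dist (x m) y ≤ (2 : ℝ)⁻¹ ^ n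

/-- `g` is a Cauchy modulus of `x`. -/
def CauchyModulus {X : Type*} [MetricSpace X] (x : ℕ → X) (g : ℕ → ℕ) : Prop :=
  ∀ n l m : ℕ, g n ≤ l → g n ≤ m → dist (x l) (x m) ≤ (2 : ℝ)⁻¹ ^ n

/-- `x` is computably Cauchy. -/
def ComputablyCauchy {X : Type*} [MetricSpace X] (x : ℕ → X) : Prop :=
  ∃ g : ℕ → ℕ, Computable g ∧ CauchyModulus x g

/-- A real sequence converges computably to `0`. -/
def CCto0 (y : ℕ → ℝ) : Prop :=
  ∃ g : ℕ → ℕ, Computable g ∧ ∀ n m : ℕ, g n ≤ m → |y m| ≤ (2 : ℝ)⁻¹ ^ n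

/-- `x` is nearly computably Cauchy. -/
def NCC {X : Type*} [MetricSpace X] (x : ℕ → X) : Prop :=
  ∀ r : ℕ → ℕ, Computable r → StrictMono r →
    CCto0 (fun n => dist (x (r (n + 1))) (x (r n)))

/-!
Take `s ∘ g` as the new modulus, where `g` is a modulus for the gaps along `s`. Since `s` tends
to infinity, every `m ≥ s (g n)` lies in a block `s k ≤ m < s (k + 1)` with `k ≥ g n`, and by
monotonicity the step `x (m + 1) - x m` is dominated by the gap `x (s (k + 1)) - x (s k)`.
-/

theorem exists_le_lt_succ_of_tendsto_atTop {α : Type*} [LinearOrder α] [NoMaxOrder α]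
    {s : ℕ → α} (hs : Tendsto s atTop atTop) {j : ℕ} {m : α} (hj : s j ≤ m) :
    ∃ k, j ≤ k ∧ s k ≤ m ∧ m < s (k + 1) := by
  by_contra! H
  have hle : ∀ i, s (j + i) ≤ m := by
    intro i
    induction i with
    | zero => simpa using hj
    | succ i ih => exact H (j + i) (by omega) ih
  obtain ⟨n, hmn, hjn⟩ := ((hs.eventually_gt_atTop m).and (eventually_ge_atTop j)).exists
  have hsn : s n ≤ m := by simpa [Nat.add_sub_cancel' hjn] using hle (n - j)
  exact hmn.not_ge hsn

theorem Monotone.abs_sub_succ_le {α : Type*} [AddCommGroup α] [LinearOrder α]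
    [IsOrderedAddMonoid α] {x : ℕ → α} (hx : Monotone x) {a b m : ℕ} (ha : a ≤ m)
    (hb : m < b) :
    |x (m + 1) - x m| ≤ |x b - x a| := by
  rw [abs_of_nonneg (sub_nonneg.mpr (hx m.le_succ))]
  exact (sub_le_sub (hx hb) (hx ha)).trans (le_abs_self _)

theorem stmt4 (x : ℕ → ℝ) (hx : Monotone x) (s : ℕ → ℕ) (hs : Computable s)
    (hsinf : Filter.Tendsto s Filter.atTop Filter.atTop)
    (h : CCto0 (fun n => x (s (n + 1)) - x (s n))) :
    CCto0 (fun n => x (n + 1) - x n) := by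
  obtain ⟨g, hg, hgap⟩ := h
  refine ⟨s ∘ g, hs.comp hg, fun n m hm => ?_⟩
  obtain ⟨k, hgk, hkm, hmk⟩ := exists_le_lt_succ_of_tendsto_atTop hsinf hm
  exact (hx.abs_sub_succ_le hkm hmk).trans (hgap n k hgk)
end

section
/- For a sequence (x_n) in a metric space, the following are equivalent: (a) for every computable strictly increasing r: ℕ → ℕ, the sequence (d(x_{r(n+1)}, x_{r(n)}))_n converges computably to 0; (b) the same holds for every computable nondecreasing unbounded r; (c) the same holds for every computable nondecreasing r. -/
/-! The implications (c) ⇒ (b) ⇒ (a) are specializations. For (a) ⇒ (b), deleting the repetitions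
from a computable monotone unbounded `r` gives a computable strictly increasing `s = r ∘ j`, and the
consecutive distances along `r` are those along `s` interspersed with zeros; so a modulus `g` for `s`
yields the modulus `j ∘ g` for `r`. For (b) ⇒ (c), a bounded monotone `r` is eventually constant,
so its consecutive distances are eventually zero. -/

open Filter Topology

theorem Computable.nat_find {α : Type*} [Primcodable α] {p : α → ℕ → Prop}
    [∀ a n, Decidable (p a n)] (hp : Computable₂ fun a n => decide (p a n))
    (h : ∀ a, ∃ n, p a n) : Computable fun a => Nat.find (h a) := by
  refine (Partrec.rfind hp.partrec₂).of_eq_tot fun a => Nat.mem_rfind.2 ⟨?_, fun hm => ?_⟩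
  · simpa using Nat.find_spec (h a)
  · simpa using Nat.find_min (h a) hm

theorem CCto0.of_abs_le {y z : ℕ → ℝ} (hz : CCto0 z) {u : ℕ → ℕ} (hu : Computable u)
    (h : ∀ k m, u k ≤ m → ∃ j, k ≤ j ∧ |y m| ≤ |z j|) : CCto0 y := by
  obtain ⟨g, hg, hgz⟩ := hz
  refine ⟨u ∘ g, hu.comp hg, fun n m hm => ?_⟩
  obtain ⟨j, hj, hyz⟩ := h (g n) m hm
  exact hyz.trans (hgz n j hj)

theorem CCto0.of_eventually_eq_zero {y : ℕ → ℝ} {N : ℕ} (h : ∀ m, N ≤ m → y m = 0) :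
    CCto0 y :=
  ⟨fun _ => N, Computable.const N, fun n m hm => by rw [h m hm, abs_zero]; positivity⟩

theorem Nat.exists_forall_ge_eq_of_monotone_of_bddAbove {r : ℕ → ℕ} (hr : Monotone r)
    (hb : BddAbove (Set.range r)) : ∃ N, ∀ m, N ≤ m → r m = r N := by
  obtain ⟨N, hN⟩ := Nat.sSup_mem (Set.range_nonempty r) hb
  exact ⟨N, fun m hm => le_antisymm (hN ▸ le_csSup hb ⟨m, rfl⟩) (hr hm)⟩

namespace UnboundedSeq

variable {r : ℕ → ℕ} (hu : ∀ M, ∃ n, M ≤ r n)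

def exceedIdx (v : ℕ) : ℕ := Nat.find (hu (v + 1))

/-- `r ∘ jumpIdx hu` lists the values of `r` in increasing order. -/
def jumpIdx : ℕ → ℕ
  | 0 => 0
  | k + 1 => exceedIdx hu (r (jumpIdx k))

theorem lt_apply_exceedIdx (v : ℕ) : v < r (exceedIdx hu v) :=
  Nat.find_spec (hu (v + 1))

theorem exceedIdx_apply_eq_succ (hr : Monotone r) {m : ℕ} (hm : r m < r (m + 1)) :
    exceedIdx hu (r m) = m + 1 :=
  (Nat.find_eq_iff _).2 ⟨hm, fun _ hn => not_le.2 (Nat.lt_succ_of_le (hr (Nat.le_of_lt_succ hn)))⟩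

theorem strictMono_comp_jumpIdx : StrictMono (r ∘ jumpIdx hu) :=
  strictMono_nat_of_lt_succ fun k => lt_apply_exceedIdx hu (r (jumpIdx hu k))

theorem apply_jumpIdx_succ (hr : Monotone r) {k m : ℕ} (hkm : r (jumpIdx hu k) = r m)
    (hm : r m < r (m + 1)) : r (jumpIdx hu (k + 1)) = r (m + 1) := by
  rw [jumpIdx, hkm, exceedIdx_apply_eq_succ hu hr hm]

theorem exists_apply_jumpIdx_eq (hr : Monotone r) (m : ℕ) : ∃ k, r (jumpIdx hu k) = r m := by
  induction m with
  | zero => exact ⟨0, rfl⟩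
  | succ m ih =>
    obtain ⟨k, hk⟩ := ih
    rcases (hr m.le_succ).lt_or_eq with hm | hm
    · exact ⟨k + 1, apply_jumpIdx_succ hu hr hk hm⟩
    · exact ⟨k, hk.trans hm⟩

theorem computable_jumpIdx (hr : Computable r) : Computable (jumpIdx hu) := by
  have hexceed : Computable (exceedIdx hu) :=
    Computable.nat_find (p := fun v n => v + 1 ≤ r n)
      (Primrec.nat_le.decide.to_comp.comp (Computable.succ.comp Computable.fst)
        (hr.comp Computable.snd)) fun v => hu (v + 1)
  refine (Computable.nat_rec Computable.id (Computable.const 0)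
    (hexceed.comp (hr.comp (Computable.snd.comp Computable.snd))).to₂).of_eq fun k => ?_
  induction k with
  | zero => rfl
  | succ k ih => rw [jumpIdx, ← ih]; rfl

end UnboundedSeq

section NearlyComputablyCauchy

variable {X : Type*} [MetricSpace X] {x : ℕ → X}

open UnboundedSeq in
theorem NCC.ccto0_of_monotone_of_unbounded (hx : NCC x) {r : ℕ → ℕ} (hrc : Computable r)
    (hr : Monotone r) (hu : ∀ M, ∃ n, M ≤ r n) :
    CCto0 fun n => dist (x (r (n + 1))) (x (r n)) := by
  have hs := hx _ (hrc.comp (computable_jumpIdx hu hrc)) (strictMono_comp_jumpIdx hu)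
  refine hs.of_abs_le (computable_jumpIdx hu hrc) fun k m hkm => ?_
  rcases (hr m.le_succ).lt_or_eq with hm | hm
  · obtain ⟨j, hj⟩ := exists_apply_jumpIdx_eq hu hr m
    refine ⟨j, (strictMono_comp_jumpIdx hu).le_iff_le.1 ((hr hkm).trans hj.ge), le_of_eq ?_⟩
    simp only [hj, apply_jumpIdx_succ hu hr hj hm]
  · exact ⟨k, le_rfl, by simp only [← hm, dist_self, abs_zero, abs_nonneg]⟩

theorem ccto0_dist_of_monotone_of_bddAbove {r : ℕ → ℕ} (hr : Monotone r)
    (hb : BddAbove (Set.range r)) : CCto0 fun n => dist (x (r (n + 1))) (x (r n)) := by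
  obtain ⟨N, hN⟩ := Nat.exists_forall_ge_eq_of_monotone_of_bddAbove hr hb
  exact CCto0.of_eventually_eq_zero (N := N) fun m hm => by
    rw [hN (m + 1) (by omega), hN m hm, dist_self]

theorem ccto0_dist_of_monotone
    (hx : ∀ r : ℕ → ℕ, Computable r → Monotone r → (∀ M, ∃ n, M ≤ r n) →
      CCto0 fun n => dist (x (r (n + 1))) (x (r n)))
    {r : ℕ → ℕ} (hrc : Computable r) (hr : Monotone r) :
    CCto0 fun n => dist (x (r (n + 1))) (x (r n)) := by
  by_cases hb : BddAbove (Set.range r)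
  · exact ccto0_dist_of_monotone_of_bddAbove hr hb
  · refine hx r hrc hr fun M => ?_
    obtain ⟨_, ⟨n, rfl⟩, hn⟩ := not_bddAbove_iff.1 hb M
    exact ⟨n, hn.le⟩

end NearlyComputablyCauchy

theorem stmt7 {X : Type*} [MetricSpace X] (x : ℕ → X) :
    ((∀ r : ℕ → ℕ, Computable r → StrictMono r →
        CCto0 (fun n => dist (x (r (n + 1))) (x (r n)))) ↔
      (∀ r : ℕ → ℕ, Computable r → Monotone r → (∀ M : ℕ, ∃ n : ℕ, M ≤ r n) →
        CCto0 (fun n => dist (x (r (n + 1))) (x (r n))))) ∧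
    ((∀ r : ℕ → ℕ, Computable r → Monotone r → (∀ M : ℕ, ∃ n : ℕ, M ≤ r n) →
        CCto0 (fun n => dist (x (r (n + 1))) (x (r n)))) ↔
      (∀ r : ℕ → ℕ, Computable r → Monotone r →
        CCto0 (fun n => dist (x (r (n + 1))) (x (r n))))) :=
  ⟨⟨fun hA _ => NCC.ccto0_of_monotone_of_unbounded hA,
      fun hB r hrc hr => hB r hrc hr.monotone fun M => ⟨M, hr.le_apply⟩⟩,
    ⟨fun hB _ => ccto0_dist_of_monotone hB, fun hC r hrc hr _ => hC r hrc hr⟩⟩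
end

section
/- Let X be a normed vector space and (x_n) a sequence in X. If for every computable strictly increasing r: ℕ → ℕ the sequence (x_{r(n+1)} − x_{r(n)})_n is computably Cauchy, then for every computable strictly increasing r: ℕ → ℕ the sequence (x_{r(n+1)} − x_{r(n)})_n converges computably to 0. -/
/-!
Write `y n = x (r (n + 1)) - x (r n)`. Along the computable indices `n ^ 2` the hypothesis makes the
block sums `x (r ((n + 1) ^ 2)) - x (r (n ^ 2)) = ∑ i < 2n+1, y (n ^ 2 + i)` a Cauchy, hence bounded,
sequence. Since `y` is Cauchy, the `2n+1` terms of the `n`-th block are eventually all close to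
`y (n ^ 2)`, so `‖y (n ^ 2)‖` is at most the block average plus a small error, and therefore `y → 0`.
A Cauchy modulus of a sequence tending to `0` is a modulus of convergence to `0`.
-/

open Filter Topology

open Finset

theorem CauchyModulus.cauchySeq {X : Type*} [MetricSpace X] {x : ℕ → X} {g : ℕ → ℕ}
    (hg : CauchyModulus x g) : CauchySeq x := by
  refine Metric.cauchySeq_iff'.2 fun ε hε => ?_
  obtain ⟨n, hn⟩ := exists_pow_lt_of_lt_one hε (by norm_num : (2 : ℝ)⁻¹ < 1)
  exact ⟨g n, fun m hm => (hg n m (g n) hm le_rfl).trans_lt hn⟩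

theorem CauchyModulus.convModulus {X : Type*} [MetricSpace X] {x : ℕ → X} {g : ℕ → ℕ} {a : X}
    (hg : CauchyModulus x g) (hx : Tendsto x atTop (𝓝 a)) : ConvModulus x a g := fun n m hm =>
  le_of_tendsto (tendsto_const_nhds.dist hx)
    (eventually_atTop.2 ⟨g n, fun k hk => hg n m k hm hk⟩)

theorem norm_le_norm_sum_div_card_add {E ι : Type*} [NormedAddCommGroup E] [NormedSpace ℝ E]
    {S : Finset ι} (hS : S.Nonempty) (w : ι → E) {v : E} {δ : ℝ}
    (hδ : ∀ i ∈ S, ‖w i - v‖ ≤ δ) : ‖v‖ ≤ ‖∑ i ∈ S, w i‖ / #S + δ := by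
  have hcard : (0 : ℝ) < #S := by exact_mod_cast hS.card_pos
  have hsplit : #S • v = ∑ i ∈ S, w i - ∑ i ∈ S, (w i - v) := by
    rw [sum_sub_distrib, sum_const, sub_sub_cancel]
  have hbound : (#S : ℝ) * ‖v‖ ≤ ‖∑ i ∈ S, w i‖ + #S * δ := calc
    (#S : ℝ) * ‖v‖ = ‖#S • v‖ := by rw [RCLike.norm_nsmul ℝ, nsmul_eq_mul]
    _ ≤ ‖∑ i ∈ S, w i‖ + ‖∑ i ∈ S, (w i - v)‖ := hsplit ▸ norm_sub_le _ _
    _ ≤ ‖∑ i ∈ S, w i‖ + #S * δ := by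
      gcongr
      simpa using norm_sum_le_of_le S hδ
  rw [div_add' _ _ _ hcard.ne', le_div_iff₀ hcard]
  linarith

theorem tendsto_zero_of_cauchySeq_of_norm_blockSum_le {E : Type*} [NormedAddCommGroup E]
    [NormedSpace ℝ E] {y : ℕ → E} (hy : CauchySeq y) {s N : ℕ → ℕ}
    (hs : Tendsto s atTop atTop) (hN : Tendsto N atTop atTop) {C : ℝ}
    (hC : ∀ n, ‖∑ i ∈ range (N n), y (s n + i)‖ ≤ C) : Tendsto y atTop (𝓝 0) := by
  refine tendsto_nhds_of_cauchySeq_of_subseq hy hs (NormedAddGroup.tendsto_nhds_zero.2 ?_)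
  intro ε hε
  obtain ⟨K, hK⟩ := Metric.cauchySeq_iff.1 hy (ε / 2) (half_pos hε)
  have hCN : Tendsto (fun n => C / N n) atTop (𝓝 0) :=
    tendsto_const_nhds.div_atTop (tendsto_natCast_atTop_atTop.comp hN)
  filter_upwards [hs.eventually_ge_atTop K, hN.eventually_gt_atTop 0,
    hCN.eventually (gt_mem_nhds (half_pos hε))] with n hsn hNn hCn
  have hclose : ∀ i ∈ range (N n), ‖y (s n + i) - y (s n)‖ ≤ ε / 2 := fun i _ =>
    (dist_eq_norm _ _).symm.trans_le (hK _ (hsn.trans (Nat.le_add_right _ _)) _ hsn).le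
  have havg := norm_le_norm_sum_div_card_add (nonempty_range_iff.2 hNn.ne') _ hclose
  rw [card_range] at havg
  have hNpos : (0 : ℝ) < N n := by exact_mod_cast hNn
  have hCdiv := div_le_div_of_nonneg_right (hC n) hNpos.le
  simp only [Function.comp_apply]
  linarith

theorem stmt8 {X : Type*} [NormedAddCommGroup X] [NormedSpace ℝ X] (x : ℕ → X)
    (h : ∀ r : ℕ → ℕ, Computable r → StrictMono r →
      ComputablyCauchy (fun n => x (r (n + 1)) - x (r n))) :
    ∀ r : ℕ → ℕ, Computable r → StrictMono r →
      CCto0 (fun n => ‖x (r (n + 1)) - x (r n)‖) := by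
  intro r hrc hrm
  obtain ⟨g, hgc, hg⟩ := h r hrc hrm
  have hsq : Computable fun n : ℕ => n ^ 2 :=
    (Primrec.nat_mul.comp Primrec.id Primrec.id).to_comp.of_eq fun n => (sq n).symm
  obtain ⟨_, -, hz⟩ := h (fun n => r (n ^ 2)) (hrc.comp hsq)
    (hrm.comp (Nat.pow_left_strictMono two_ne_zero))
  obtain ⟨C, hC⟩ := hz.cauchySeq.norm_bddAbove
  have hblock : ∀ n, ‖∑ i ∈ range (2 * n + 1),
      (x (r (n ^ 2 + (i + 1))) - x (r (n ^ 2 + i)))‖ ≤ C := fun n => by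
    rw [sum_range_sub (fun i => x (r (n ^ 2 + i))), show n ^ 2 + (2 * n + 1) = (n + 1) ^ 2 by ring]
    exact hC ⟨n, rfl⟩
  have hlim := tendsto_zero_of_cauchySeq_of_norm_blockSum_le hg.cauchySeq
    (tendsto_pow_atTop two_ne_zero)
    (tendsto_atTop_mono (fun n => show n ≤ 2 * n + 1 by omega) tendsto_id) hblock
  refine ⟨g, hgc, fun n m hm => ?_⟩
  simpa using hg.convModulus hlim n m hm
end

section
/- Let (x_n) and (y_n) be sequences in a metric space such that the real sequence (d(x_n, y_n))_n converges computably to 0. Then (x_n) is nearly computably Cauchy if and only if (y_n) is nearly computably Cauchy. -/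
open Filter Topology

namespace CCto0

theorem of_abs_le_s11 {a b : ℕ → ℝ} (ha : CCto0 a) (hba : ∀ m, |b m| ≤ |a m|) : CCto0 b := by
  obtain ⟨g, hgc, hg⟩ := ha
  exact ⟨g, hgc, fun n m hm => (hba m).trans (hg n m hm)⟩

theorem comp_strictMono {a : ℕ → ℝ} (ha : CCto0 a) {r : ℕ → ℕ} (hr : StrictMono r) :
    CCto0 (fun n => a (r n)) := by
  obtain ⟨g, hgc, hg⟩ := ha
  exact ⟨g, hgc, fun n m hm => hg n (r m) (hm.trans hr.le_apply)⟩

theorem add {a b : ℕ → ℝ} (ha : CCto0 a) (hb : CCto0 b) : CCto0 (fun n => a n + b n) := by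
  obtain ⟨f, hfc, hf⟩ := ha
  obtain ⟨g, hgc, hg⟩ := hb
  refine ⟨fun n => max (f (n + 1)) (g (n + 1)),
    Primrec.nat_max.to_comp.comp (hfc.comp Computable.succ) (hgc.comp Computable.succ),
    fun n m hm => ?_⟩
  calc |a m + b m| ≤ |a m| + |b m| := abs_add_le _ _
    _ ≤ (2 : ℝ)⁻¹ ^ (n + 1) + (2 : ℝ)⁻¹ ^ (n + 1) :=
      add_le_add (hf _ _ (le_of_max_le_left hm)) (hg _ _ (le_of_max_le_right hm))
    _ = (2 : ℝ)⁻¹ ^ n := by ring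

end CCto0

theorem NCC.of_dist_ccto0 {X : Type*} [MetricSpace X] {x y : ℕ → X} (hx : NCC x)
    (hxy : CCto0 (fun n => dist (x n) (y n))) : NCC y := by
  intro r hr hmono
  have hcur := hxy.comp_strictMono hmono
  have hnext : CCto0 fun n => dist (x (r (n + 1))) (y (r (n + 1))) :=
    hcur.comp_strictMono (strictMono_id.add_const 1)
  refine ((hnext.add (hx r hr hmono)).add hcur).of_abs_le_s11 fun m => ?_
  rw [abs_of_nonneg dist_nonneg, abs_of_nonneg (by positivity), dist_comm (x _) (y _)]
  exact dist_triangle4 _ _ _ _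

theorem stmt11 {X : Type*} [MetricSpace X] (x y : ℕ → X)
    (h : CCto0 (fun n => dist (x n) (y n))) : NCC x ↔ NCC y :=
  have hyx : CCto0 (fun n => dist (y n) (x n)) := h.of_abs_le_s11 fun m => by rw [dist_comm]
  ⟨fun hx => hx.of_dist_ccto0 h, fun hy => hy.of_dist_ccto0 hyx⟩
end

section
/- Let (x_n) be a nearly computably Cauchy sequence in a metric space and s: ℕ → ℕ a computable nondecreasing unbounded function. Then the sequence (x_{s(n)})_n is nearly computably Cauchy. -/
open Filter Topology

/-!
Let `0 = j₀ < j₁ < ⋯` be the indices at which the unbounded monotone `u = s ∘ r` strictly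
increases; they are found by unbounded search, so `j` is computable and `u ∘ j` is a computable
strictly increasing reindexing of `x`, whose consecutive distances have a computable modulus `g`
by hypothesis. Since `u` is constant on `[jₖ, jₖ₊₁)`, each consecutive distance of `x ∘ u` is
either `0` or the `k`-th consecutive distance of `x ∘ u ∘ j`, where `jₖ ≤ m < jₖ₊₁`;
hence `j ∘ g` is a modulus for `x ∘ u`.
-/

theorem CCto0.of_abs_le_of_monotone {y z : ℕ → ℝ} (hz : CCto0 z) {j : ℕ → ℕ}
    (hj : Computable j) (hjm : Monotone j)
    (hyz : ∀ m, ∃ k, m < j (k + 1) ∧ |y m| ≤ |z k|) : CCto0 y := by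
  obtain ⟨g, hg, hgz⟩ := hz
  refine ⟨j ∘ g, hj.comp hg, fun n m hm => ?_⟩
  obtain ⟨k, hmk, hyk⟩ := hyz m
  have hgk : g n ≤ k := Nat.lt_succ_iff.mp (hjm.reflect_lt (hm.trans_lt hmk))
  exact hyk.trans (hgz n k hgk)

theorem Nat.exists_apply_le_lt_apply_succ {f : ℕ → ℕ} (hf : StrictMono f) (h0 : f 0 = 0)
    (m : ℕ) : ∃ k, f k ≤ m ∧ m < f (k + 1) := by
  induction m with
  | zero => exact ⟨0, h0.le, (Nat.zero_le _).trans_lt (hf Nat.zero_lt_one)⟩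
  | succ m ih =>
    obtain ⟨k, hkm, hmk⟩ := ih
    rcases (show m + 1 ≤ f (k + 1) from hmk).lt_or_eq with hlt | heq
    · exact ⟨k, hkm.trans m.le_succ, hlt⟩
    · exact ⟨k + 1, heq.ge, heq.trans_lt (hf (Nat.lt_succ_self _))⟩

theorem exists_apply_gt_of_unbounded {u : ℕ → ℕ} (hunb : ∀ M, ∃ n, M ≤ u n) (a : ℕ) :
    ∃ b, u a < u b :=
  hunb (u a + 1)

section NextIncrease

variable {u : ℕ → ℕ} (hunb : ∀ M, ∃ n, M ≤ u n)

noncomputable def nextIncrease (a : ℕ) : ℕ := Nat.find (exists_apply_gt_of_unbounded hunb a)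

theorem apply_lt_apply_nextIncrease (a : ℕ) : u a < u (nextIncrease hunb a) :=
  Nat.find_spec (exists_apply_gt_of_unbounded hunb a)

theorem lt_nextIncrease (hu : Monotone u) (a : ℕ) : a < nextIncrease hunb a :=
  hu.reflect_lt (apply_lt_apply_nextIncrease hunb a)

theorem apply_eq_of_le_of_lt_nextIncrease (hu : Monotone u) {a b : ℕ} (hab : a ≤ b)
    (hb : b < nextIncrease hunb a) : u b = u a :=
  (not_lt.mp (Nat.find_min (exists_apply_gt_of_unbounded hunb a) hb)).antisymm (hu hab)

theorem computable_nextIncrease (hc : Computable u) : Computable (nextIncrease hunb) := by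
  refine Computable.find ?_ (exists_apply_gt_of_unbounded hunb)
  exact (Primrec.nat_lt.decide.to_comp.comp (hc.comp .fst) (hc.comp .snd)).computablePred

noncomputable def increaseIndex (k : ℕ) : ℕ := (nextIncrease hunb)^[k] 0

theorem increaseIndex_succ (k : ℕ) :
    increaseIndex hunb (k + 1) = nextIncrease hunb (increaseIndex hunb k) :=
  Function.iterate_succ_apply' _ _ _

theorem strictMono_increaseIndex (hu : Monotone u) : StrictMono (increaseIndex hunb) :=
  strictMono_nat_of_lt_succ fun k => (increaseIndex_succ hunb k).symm ▸ lt_nextIncrease hunb hu _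

theorem strictMono_comp_increaseIndex : StrictMono (u ∘ increaseIndex hunb) :=
  strictMono_nat_of_lt_succ fun k => by
    simpa only [Function.comp_apply, increaseIndex_succ] using
      apply_lt_apply_nextIncrease hunb (increaseIndex hunb k)

theorem computable_increaseIndex (hc : Computable u) : Computable (increaseIndex hunb) := by
  refine (Computable.nat_rec .id (Computable.const 0)
    ((computable_nextIncrease hunb hc).comp (Computable.snd.comp .snd)).to₂).of_eq fun k => ?_
  induction k with
  | zero => rfl
  | succ k ih => exact (congrArg (nextIncrease hunb) ih).trans (increaseIndex_succ hunb k).symm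

end NextIncrease

theorem NCC.ccto0_dist_comp_of_monotone {X : Type*} [MetricSpace X] {x : ℕ → X} (hx : NCC x)
    {u : ℕ → ℕ} (hc : Computable u) (hu : Monotone u) (hunb : ∀ M, ∃ n, M ≤ u n) :
    CCto0 (fun n => dist (x (u (n + 1))) (x (u n))) := by
  refine (hx _ (hc.comp (computable_increaseIndex hunb hc)) (strictMono_comp_increaseIndex hunb)
    ).of_abs_le_of_monotone (computable_increaseIndex hunb hc)
    (strictMono_increaseIndex hunb hu).monotone fun m => ?_
  obtain ⟨k, hkm, hmk⟩ :=
    Nat.exists_apply_le_lt_apply_succ (strictMono_increaseIndex hunb hu) rfl m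
  rw [increaseIndex_succ] at hmk
  refine ⟨k, by rwa [increaseIndex_succ], ?_⟩
  have hum : u m = u (increaseIndex hunb k) := apply_eq_of_le_of_lt_nextIncrease hunb hu hkm hmk
  rcases (show m + 1 ≤ _ from hmk).lt_or_eq with hlt | heq
  · rw [hum, apply_eq_of_le_of_lt_nextIncrease hunb hu (hkm.trans m.le_succ) hlt, dist_self,
      abs_zero]
    exact abs_nonneg _
  · rw [hum, heq, increaseIndex_succ]

theorem stmt12 {X : Type*} [MetricSpace X] (x : ℕ → X) (hx : NCC x)
    (s : ℕ → ℕ) (hs : Computable s) (hmono : Monotone s)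
    (hunb : ∀ M : ℕ, ∃ n : ℕ, M ≤ s n) : NCC (fun n => x (s n)) := by
  intro r hr hrmono
  refine hx.ccto0_dist_comp_of_monotone (hs.comp hr) (hmono.comp hrmono.monotone) fun M => ?_
  obtain ⟨n, hn⟩ := hunb M
  exact ⟨n, hn.trans (hmono hrmono.le_apply)⟩
end

section
/- Let α be a left-computable real number. Then α is nearly computable if and only if for every strictly increasing computable sequence (a_n) of rational numbers converging to α, the sequence (a_{n+1} − a_n)_n converges computably to 0. -/
open Filter Topology

/-- `α` is a nearly computable real number. -/
def NearlyCompReal (α : ℝ) : Prop :=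
  ∃ a : ℕ → ℚ, Computable a ∧
    Filter.Tendsto (fun n => (a n : ℝ)) Filter.atTop (nhds α) ∧
    NCC (fun n => (a n : ℝ))

/-!
Given a nearly computable approximation `b` of `α` and a strictly increasing computable
approximation `a`, a computable search yields strictly increasing computable index sequences
`u`, `v` with `|b (u n) - a (v n)| ≤ 2⁻ⁿ`. Applying near computable Cauchyness of `b` to `u`
makes the gaps `a (v (n + 1)) - a (v n)` converge computably to `0`, and since `a` is monotone
every gap `a (j + 1) - a j` lies inside one of them. Conversely, a strictly increasing
computable `r` turns the given increasing approximation `a` into another one, `a ∘ r`, whose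
consecutive differences are exactly those that near computable Cauchyness asks about.

The search has to decide `|q - r| < 2⁻ˢ` for rationals, so it must decode the `Primcodable ℚ`
instance, which enumerates the range of the `Encodable ℚ` code `Nat.pair (encode q.num) q.den`;
membership in that range is a coprimality test.
-/

open Encodable Denumerable

namespace Primrec

theorem nat_dvd : PrimrecRel ((· ∣ ·) : ℕ → ℕ → Prop) :=
  (Primrec.eq.comp (nat_mod.comp snd fst) (const 0)).of_eq fun _ => Nat.dvd_iff_mod_eq_zero.symm

theorem nat_gcd : Primrec₂ Nat.gcd := by
  refine (nat_findGreatest (p := fun (x : ℕ × ℕ) d => d ∣ x.1 ∧ d ∣ x.2) (nat_add.comp fst snd)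
    (PrimrecPred.and (nat_dvd.comp snd (fst.comp fst)) (nat_dvd.comp snd (snd.comp fst)))).of_eq
    fun x => ?_
  rw [Nat.findGreatest_eq_iff]
  refine ⟨?_, fun _ => ⟨Nat.gcd_dvd_left _ _, Nat.gcd_dvd_right _ _⟩, fun d hlt _ hd => ?_⟩
  · rcases Nat.eq_zero_or_pos x.1 with h | h
    · simp [h]
    · exact (Nat.gcd_le_left _ h).trans (Nat.le_add_right _ _)
  · have hpos : 0 < Nat.gcd x.1 x.2 := Nat.pos_of_ne_zero fun h0 => by
      rw [Nat.gcd_eq_zero_iff] at h0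
      omega
    exact (Nat.le_of_dvd hpos (Nat.dvd_gcd hd.1 hd.2)).not_gt hlt

theorem int_equivNatSumNat : Primrec Equiv.intEquivNatSumNat :=
  encode_iff.1 <| Primrec.encode.of_eq fun z => by cases z <;> rfl

theorem int_equivNatSumNat_symm : Primrec Equiv.intEquivNatSumNat.symm :=
  encode_iff.1 <| Primrec.encode.of_eq fun w => by cases w <;> rfl

theorem int_toNat_neg_toNat : Primrec fun z : ℤ => (z.toNat, (-z).toNat) :=
  (sumCasesOn (g := fun _ n => (n, 0)) (h := fun _ n => (0, n + 1)) int_equivNatSumNat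
    (pair snd (const 0)) (pair (const 0) (succ.comp snd))).of_eq fun z => by
    rcases z with n | n
    · show (n, 0) = (n, (-(n : ℤ)).toNat)
      simp
    · rfl

theorem int_natCast_sub_natCast : Primrec fun p : ℕ × ℕ => (p.1 : ℤ) - p.2 := by
  refine (int_equivNatSumNat_symm.comp (ite (nat_le.comp snd fst)
    (sumInl.comp (nat_sub.comp fst snd))
    (sumInr.comp (nat_sub.comp (nat_sub.comp snd fst) (const 1))))).of_eq fun p => ?_
  split_ifs <;>
    simp only [Equiv.intEquivNatSumNat, Equiv.symm_mk, Equiv.coe_fn_mk, Sum.elim_inl, Sum.elim_inr,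
      Int.ofNat_eq_natCast] <;>
    omega

theorem int_natAbs : Primrec Int.natAbs :=
  (nat_add.comp (fst.comp int_toNat_neg_toNat) (snd.comp int_toNat_neg_toNat)).of_eq
    fun _ => by omega

theorem int_natCast : Primrec (Nat.cast : ℕ → ℤ) :=
  (int_natCast_sub_natCast.comp (pair .id (const 0))).of_eq fun _ => sub_zero _

theorem int_sub : Primrec₂ ((· - ·) : ℤ → ℤ → ℤ) := by
  have h := int_toNat_neg_toNat
  refine (int_natCast_sub_natCast.comp
    (pair (nat_add.comp (fst.comp (h.comp fst)) (snd.comp (h.comp snd)))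
      (nat_add.comp (snd.comp (h.comp fst)) (fst.comp (h.comp snd))))).of_eq fun p => ?_
  push_cast
  omega

theorem int_mul : Primrec₂ ((· * ·) : ℤ → ℤ → ℤ) := by
  have h := int_toNat_neg_toNat
  refine (int_natCast_sub_natCast.comp (pair
    (nat_add.comp (nat_mul.comp (fst.comp (h.comp fst)) (fst.comp (h.comp snd)))
      (nat_mul.comp (snd.comp (h.comp fst)) (snd.comp (h.comp snd))))
    (nat_add.comp (nat_mul.comp (fst.comp (h.comp fst)) (snd.comp (h.comp snd)))
      (nat_mul.comp (snd.comp (h.comp fst)) (fst.comp (h.comp snd)))))).of_eq fun p => ?_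
  push_cast
  linear_combination ((p.2.toNat : ℤ) - (-p.2).toNat) * p.1.toNat_sub_toNat_neg +
    p.1 * p.2.toNat_sub_toNat_neg

end Primrec

theorem ComputablePred.comp {α β : Type*} [Primcodable α] [Primcodable β] {p : β → Prop}
    {f : α → β} (hp : ComputablePred p) (hf : Computable f) : ComputablePred fun a => p (f a) := by
  obtain ⟨_, hp⟩ := hp
  exact (hp.comp hf).computablePred

namespace Nat

theorem nth_succ_eq_add_find {p : ℕ → Prop} [DecidablePred p] (hinf : (Set.ofPred p).Infinite)
    (n : ℕ) (hex : ∃ m, p (nth p n + m + 1)) : nth p (n + 1) = nth p n + Nat.find hex + 1 := by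
  have hlt : nth p n < nth p (n + 1) := nth_strictMono hinf n.lt_succ_self
  refine le_antisymm ?_ ?_
  · by_contra! h
    exact absurd (le_nth_of_lt_nth_succ h (Nat.find_spec hex)) (by omega)
  · have := Nat.find_min' hex (m := nth p (n + 1) - nth p n - 1)
      (by rw [show nth p n + (nth p (n + 1) - nth p n - 1) + 1 = nth p (n + 1) by omega]
          exact nth_mem_of_infinite hinf _)
    omega

theorem computable_nth {p : ℕ → Prop} (hp : ComputablePred p) (hinf : (Set.ofPred p).Infinite) :
    Computable (nth p) := by
  obtain ⟨_, hdec⟩ := hp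
  have hex (y : ℕ) : ∃ m, p (y + m + 1) := by
    obtain ⟨z, hz, hyz⟩ := hinf.exists_gt y
    exact ⟨z - y - 1, by rwa [show y + (z - y - 1) + 1 = z by omega]⟩
  have hstep : Computable fun y => y + Nat.find (hex y) + 1 :=
    Computable.succ.comp (Primrec.nat_add.to_comp.comp Computable.id
      (Computable.find ((hdec.comp (_root_.Primrec.succ.to_comp.comp
        (Primrec.nat_add.to_comp.comp Computable.fst Computable.snd))).computablePred) hex))
  refine (Computable.nat_rec (f := id) (g := fun _ => nth p 0)
    (h := fun _ q => q.2 + Nat.find (hex q.2) + 1) Computable.id (Computable.const _)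
    (hstep.comp (Computable.snd.comp Computable.snd)).to₂).of_eq fun n => ?_
  induction n with
  | zero => rfl
  | succ n ih =>
    simp only [id] at ih ⊢
    rw [ih, nth_succ_eq_add_find hinf]

end Nat

namespace Rat

theorem encode_eq_pair (q : ℚ) : encode q = Nat.pair (encode q.num) q.den := by
  rcases q with ⟨_, _, _, _⟩
  rfl

theorem mem_range_encode_iff (x : ℕ) : x ∈ Set.range (encode : ℚ → ℕ) ↔
    0 < x.unpair.2 ∧ (ofNat ℤ x.unpair.1).natAbs.Coprime x.unpair.2 := by
  constructor
  · rintro ⟨q, rfl⟩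
    rw [encode_eq_pair, Nat.unpair_pair, ofNat_encode]
    exact ⟨q.pos, q.reduced⟩
  · rintro ⟨hpos, hcop⟩
    refine ⟨⟨ofNat ℤ x.unpair.1, x.unpair.2, hpos.ne', hcop⟩, ?_⟩
    rw [encode_eq_pair, Denumerable.encode_ofNat, Nat.pair_unpair]

theorem primrecPred_mem_range_encode : PrimrecPred (· ∈ Set.range (encode : ℚ → ℕ)) := by
  refine (PrimrecPred.and (Primrec.nat_lt.comp (Primrec.const 0) (Primrec.snd.comp Primrec.unpair))
    (Primrec.eq.comp (Primrec.nat_gcd.comp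
      (Primrec.int_natAbs.comp ((Primrec.ofNat ℤ).comp (Primrec.fst.comp Primrec.unpair)))
      (Primrec.snd.comp Primrec.unpair)) (Primrec.const 1))).of_eq fun x => ?_
  rw [mem_range_encode_iff, Nat.coprime_iff_gcd_eq_one]

theorem encode_ofNat_eq_nth (n : ℕ) :
    encode (ofNat ℚ n) = Nat.nth (· ∈ Set.range (encode : ℚ → ℕ)) n := by
  let := decidableRangeEncode ℚ
  conv_rhs => rw [← Denumerable.encode_ofNat (α := ℚ) n]
  -- the `Denumerable ℚ` code of `q` is, by definition, the number of codes below `encode q`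
  exact (Nat.nth_count ⟨_, rfl⟩).symm

theorem computable_encode : Computable (encode : ℚ → ℕ) :=
  ((Nat.computable_nth primrecPred_mem_range_encode.computablePred
    (Set.infinite_range_of_injective encode_injective)).comp Computable.encode).of_eq fun q => by
    rw [← encode_ofNat_eq_nth, ofNat_encode]

theorem computable_num : Computable Rat.num :=
  ((Computable.ofNat ℤ).comp (Computable.fst.comp (Computable.unpair.comp computable_encode))).of_eq
    fun q => by rw [encode_eq_pair, Nat.unpair_pair, ofNat_encode]

theorem computable_den : Computable Rat.den :=
  (Computable.snd.comp (Computable.unpair.comp computable_encode)).of_eq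
    fun q => by rw [encode_eq_pair, Nat.unpair_pair]

theorem abs_sub_lt_two_inv_pow_iff (q r : ℚ) (s : ℕ) :
    |q - r| < 2⁻¹ ^ s ↔ (q.num * r.den - r.num * q.den).natAbs * 2 ^ s < q.den * r.den := by
  have hden : (0 : ℚ) < q.den * r.den := by positivity
  have hsub : q - r = ((q.num * r.den - r.num * q.den : ℤ) : ℚ) / (q.den * r.den) := by
    conv_lhs => rw [← q.num_div_den, ← r.num_div_den]
    rw [div_sub_div _ _ (by positivity) (by positivity)]
    push_cast
    ring
  rw [hsub, abs_div, abs_of_pos hden, div_lt_iff₀ hden, inv_pow, inv_mul_eq_div,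
    lt_div_iff₀ (by positivity), ← Int.cast_abs, Int.abs_eq_natAbs]
  exact_mod_cast Iff.rfl

theorem computablePred_abs_sub_lt_two_inv_pow :
    ComputablePred fun p : ℚ × ℚ × ℕ => |p.1 - p.2.1| < 2⁻¹ ^ p.2.2 := by
  have hq := Computable.fst (α := ℚ) (β := ℚ × ℕ)
  have hr := Computable.fst.comp (Computable.snd (α := ℚ) (β := ℚ × ℕ))
  have hs := Computable.snd.comp (Computable.snd (α := ℚ) (β := ℚ × ℕ))
  have hnum : Computable fun p : ℚ × ℚ × ℕ =>
      (p.1.num * p.2.1.den - p.2.1.num * p.1.den).natAbs :=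
    Primrec.int_natAbs.to_comp.comp (Primrec.int_sub.to_comp.comp
      (Primrec.int_mul.to_comp.comp (computable_num.comp hq)
        (Primrec.int_natCast.to_comp.comp (computable_den.comp hr)))
      (Primrec.int_mul.to_comp.comp (computable_num.comp hr)
        (Primrec.int_natCast.to_comp.comp (computable_den.comp hq))))
  have hpow : Computable fun p : ℚ × ℚ × ℕ => 2 ^ p.2.2 :=
    (Primrec₂.unpaired'.mp Nat.Primrec.pow).to_comp.comp (Computable.const 2) hs
  refine (Primrec.nat_lt.decide.to_comp.comp (Primrec.nat_mul.to_comp.comp hnum hpow)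
    (Primrec.nat_mul.to_comp.comp (computable_den.comp hq) (computable_den.comp hr))
    ).computablePred.of_eq fun p => (abs_sub_lt_two_inv_pow_iff _ _ _).symm

end Rat

theorem CCto0.of_abs_le_s18 {x y : ℕ → ℝ} (hy : CCto0 y) (h : ∀ n, |x n| ≤ |y n| + 2 * 2⁻¹ ^ n) :
    CCto0 x := by
  obtain ⟨g, hg, hgy⟩ := hy
  refine ⟨fun k => max (g (k + 1)) (k + 2),
    Primrec.nat_max.to_comp.comp (hg.comp Computable.succ) (Primrec.succ.comp Primrec.succ).to_comp,
    fun k m hm => ?_⟩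
  obtain ⟨hgm, hkm⟩ := max_le_iff.1 hm
  have hpow : 2 * (2 : ℝ)⁻¹ ^ m ≤ 2⁻¹ ^ (k + 1) :=
    calc 2 * (2 : ℝ)⁻¹ ^ m ≤ 2 * 2⁻¹ ^ (k + 2) :=
          mul_le_mul_of_nonneg_left (pow_le_pow_of_le_one (by norm_num) (by norm_num) hkm)
            two_pos.le
      _ = 2⁻¹ ^ (k + 1) := by ring
  calc |x m| ≤ |y m| + 2 * 2⁻¹ ^ m := h m
    _ ≤ 2⁻¹ ^ (k + 1) + 2⁻¹ ^ (k + 1) := add_le_add (hgy _ _ hgm) hpow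
    _ = 2⁻¹ ^ k := by ring

theorem CCto0.sub_of_monotone_of_subseq {x : ℕ → ℝ} (hx : Monotone x) {v : ℕ → ℕ}
    (hcv : Computable v) (hv : StrictMono v) (h : CCto0 fun n => x (v (n + 1)) - x (v n)) :
    CCto0 fun n => x (n + 1) - x n := by
  obtain ⟨g, hg, hgx⟩ := h
  refine ⟨fun k => v (g k), hcv.comp hg, fun k m hm => ?_⟩
  have hv' : StrictMono fun i => v (g k + i) := hv.comp fun _ _ h => Nat.add_lt_add_left h _
  obtain ⟨i, hi, hi'⟩ := hv'.exists_between_of_tendsto_atTop hv'.tendsto_atTop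
    (x := m + 1) (Nat.lt_succ_of_le hm)
  have hbracket : x (m + 1) - x m ≤ x (v (g k + i + 1)) - x (v (g k + i)) :=
    sub_le_sub (hx hi') (hx (Nat.le_of_lt_succ hi))
  rw [abs_of_nonneg (sub_nonneg.2 (hx m.le_succ))]
  exact hbracket.trans ((le_abs_self _).trans (hgx k _ (Nat.le_add_right _ _)))

section Search

variable {a b : ℕ → ℚ}

theorem exists_abs_sub_lt_of_tendsto {α : ℝ} (ha : Tendsto (fun n => (a n : ℝ)) atTop (𝓝 α))
    (hb : Tendsto (fun n => (b n : ℝ)) atTop (𝓝 α)) (s i j : ℕ) :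
    ∃ k : ℕ, |b (i + k.unpair.1) - a (j + k.unpair.2)| < 2⁻¹ ^ s := by
  have hlim : Tendsto (fun n => |(b n : ℝ) - a n|) atTop (𝓝 0) := by
    simpa using (hb.sub ha).abs
  obtain ⟨M, hM⟩ := eventually_atTop.1
    (hlim.eventually (gt_mem_nhds (show (0 : ℝ) < 2⁻¹ ^ s by positivity)))
  let N := max M (i + j)
  refine ⟨Nat.pair (N - i) (N - j), ?_⟩
  rw [Nat.unpair_pair, show i + (N - i) = N by omega, show j + (N - j) = N by omega]
  exact (Rat.cast_lt (K := ℝ)).1 (by push_cast; exact hM N (le_max_left _ _))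

theorem computable_find_abs_sub_lt (hca : Computable a) (hcb : Computable b)
    (hex : ∀ x : ℕ × ℕ × ℕ,
      ∃ k : ℕ, |b (x.2.1 + k.unpair.1) - a (x.2.2 + k.unpair.2)| < 2⁻¹ ^ x.1) :
    Computable fun x => Nat.find (hex x) := by
  have hk := Computable.unpair.comp (Computable.snd (α := ℕ × ℕ × ℕ) (β := ℕ))
  have hx := Computable.fst (α := ℕ × ℕ × ℕ) (β := ℕ)
  exact Computable.find (Rat.computablePred_abs_sub_lt_two_inv_pow.comp
    ((hcb.comp (Primrec.nat_add.to_comp.comp (Computable.fst.comp (Computable.snd.comp hx))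
      (Computable.fst.comp hk))).pair
    ((hca.comp (Primrec.nat_add.to_comp.comp (Computable.snd.comp (Computable.snd.comp hx))
      (Computable.snd.comp hk))).pair (Computable.fst.comp hx)))) hex

theorem exists_computable_strictMono_close {α : ℝ} (hca : Computable a) (hcb : Computable b)
    (ha : Tendsto (fun n => (a n : ℝ)) atTop (𝓝 α))
    (hb : Tendsto (fun n => (b n : ℝ)) atTop (𝓝 α)) :
    ∃ u v : ℕ → ℕ, Computable u ∧ StrictMono u ∧ Computable v ∧ StrictMono v ∧
      ∀ n, |(b (u n) : ℝ) - a (v n)| ≤ 2⁻¹ ^ n := by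
  have hex (x : ℕ × ℕ × ℕ) := exists_abs_sub_lt_of_tendsto ha hb x.1 x.2.1 x.2.2
  let step (x : ℕ × ℕ × ℕ) : ℕ × ℕ :=
    (x.2.1 + (Nat.find (hex x)).unpair.1, x.2.2 + (Nat.find (hex x)).unpair.2)
  have hstep : Computable step := by
    have hk := Computable.unpair.comp (computable_find_abs_sub_lt hca hcb hex)
    exact (Primrec.nat_add.to_comp.comp (Computable.fst.comp Computable.snd)
      (Computable.fst.comp hk)).pair
      (Primrec.nat_add.to_comp.comp (Computable.snd.comp Computable.snd) (Computable.snd.comp hk))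
  -- each search starts strictly beyond the previous pair, so both coordinates strictly increase
  let w (n : ℕ) : ℕ × ℕ :=
    Nat.rec (step (0, 0, 0)) (fun n y => step (n + 1, y.1 + 1, y.2 + 1)) n
  have hw : Computable w := Computable.nat_rec Computable.id (Computable.const _)
    (hstep.comp (Computable.succ.comp (Computable.fst.comp Computable.snd) |>.pair
      ((Computable.succ.comp (Computable.fst.comp (Computable.snd.comp Computable.snd))).pair
        (Computable.succ.comp (Computable.snd.comp (Computable.snd.comp Computable.snd)))))).to₂
  refine ⟨fun n => (w n).1, fun n => (w n).2, Computable.fst.comp hw,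
    strictMono_nat_of_lt_succ fun n => ?_, Computable.snd.comp hw,
    strictMono_nat_of_lt_succ fun n => ?_, fun n => ?_⟩
  · show (w n).1 < (w n).1 + 1 + _
    omega
  · show (w n).2 < (w n).2 + 1 + _
    omega
  · obtain ⟨y, hy⟩ : ∃ y, w n = step (n, y) := by
      cases n with
      | zero => exact ⟨(0, 0), rfl⟩
      | succ n => exact ⟨_, rfl⟩
    have hspec : |b (step (n, y)).1 - a (step (n, y)).2| < 2⁻¹ ^ n := Nat.find_spec (hex (n, y))
    have hcast := (Rat.cast_le (K := ℝ)).2 hspec.le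
    push_cast at hcast
    show |(b (w n).1 : ℝ) - a (w n).2| ≤ _
    rwa [hy]

end Search

theorem stmt18 (α : ℝ)
    (hlc : ∃ a : ℕ → ℚ, Computable a ∧ StrictMono a ∧
      Filter.Tendsto (fun n => (a n : ℝ)) Filter.atTop (nhds α)) :
    NearlyCompReal α ↔
      ∀ a : ℕ → ℚ, Computable a → StrictMono a →
        Filter.Tendsto (fun n => (a n : ℝ)) Filter.atTop (nhds α) →
        CCto0 (fun n => (a (n + 1) : ℝ) - (a n : ℝ)) := by
  constructor
  · rintro ⟨b, hcb, hb, hbncc⟩ a hca hmono ha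
    obtain ⟨u, v, hcu, hu, hcv, hv, hclose⟩ := exists_computable_strictMono_close hca hcb ha hb
    refine CCto0.sub_of_monotone_of_subseq (fun _ _ h => Rat.cast_le.2 (hmono.monotone h)) hcv hv
      ((hbncc u hcu hu).of_abs_le_s18 fun n => ?_)
    have h₁ := abs_le.1 (hclose (n + 1))
    have h₀ := abs_le.1 (hclose n)
    beta_reduce
    rw [abs_of_nonneg dist_nonneg, Real.dist_eq, abs_le]
    constructor <;> linarith [le_abs_self ((b (u (n + 1)) : ℝ) - b (u n)),
      neg_abs_le ((b (u (n + 1)) : ℝ) - b (u n)), pow_succ (2 : ℝ)⁻¹ n]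
  · intro H
    obtain ⟨a, hca, hmono, ha⟩ := hlc
    refine ⟨a, hca, ha, fun r hcr hr => ?_⟩
    obtain ⟨g, hg, hga⟩ := H _ (hca.comp hcr) (hmono.comp hr) (ha.comp hr.tendsto_atTop)
    refine ⟨g, hg, fun n m hm => ?_⟩
    rw [abs_of_nonneg dist_nonneg, Real.dist_eq]
    exact hga n m hm
end
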